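/- arXiv:2208.02054 — 7 statements merged into one kernel-verified Lean document; each statement's English description precedes it below -/
import Mathlib

section
/- Let N ≥ 1 and let a_1, …, a_N be real numbers with a_1 = 1. If ∑_{j=1}^{N} a_j·cos((2j−1)t) ≥ 0 for all t ∈ [0, π/2], then ∑_{j=1}^{N} (−1)^{j+1} a_j ≥ 1/(2·cos²(π/(2N+2))). -/
/-!
Put `F t = ∑ a_j cos ((2j-1)t)` and `G t = F t / cos t = ∑ a_j cos ((2j-1)t) / cos t`, an even
trigonometric polynomial of degree `N - 1` in `2t` with constant term `S = ∑ (-1)^(j+1) a_j`.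
From `F ≥ 0` on `[0, π/2]` we get `G ≥ 0` on `[0, π]`, by continuity at `π/2` and the symmetry
`t ↦ π - t`. At the Chebyshev nodes `t_k = (2k+1)θ`, `θ = π/(2N+2)`, the sums `∑_k cos (2m t_k)`
vanish for `0 < m ≤ N`, so the quadrature with the nonnegative weights `cos² θ - cos² t_k` gives
`0 ≤ ∑_k (cos² θ - cos² t_k) G t_k = (N+1) (cos² θ S - a_1 / 2)`.
-/

open Real Finset

/-- `cos ((2j-1)t) / cos t`, written as a trigonometric polynomial so that it keeps its true value
at the zeros of `cos`. -/
noncomputable def cosOddDivCos : ℕ → ℝ → ℝ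
  | 0, _ => 1
  | j + 1, t => 2 * cos (2 * j * t) - cosOddDivCos j t

theorem cos_mul_cosOddDivCos (j : ℕ) (t : ℝ) :
    cos t * cosOddDivCos j t = cos ((2 * j - 1) * t) := by
  induction j with
  | zero => simp [cosOddDivCos, neg_mul]
  | succ j ih =>
    rw [cosOddDivCos, mul_sub, ih]
    push_cast
    rw [show (2 * ((j : ℝ) + 1) - 1) * t = 2 * j * t + t by ring,
      show (2 * (j : ℝ) - 1) * t = 2 * j * t - t by ring, cos_add, cos_sub]
    ring

theorem continuous_cosOddDivCos (j : ℕ) : Continuous (cosOddDivCos j) := by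
  induction j with
  | zero => exact continuous_const
  | succ j ih =>
    exact (continuous_const.mul (continuous_cos.comp (continuous_const_mul _))).sub ih

theorem cosOddDivCos_pi_sub (j : ℕ) (t : ℝ) : cosOddDivCos j (π - t) = cosOddDivCos j t := by
  induction j with
  | zero => rfl
  | succ j ih =>
    have : 2 * (j : ℝ) * (π - t) = (j : ℝ) * (2 * π) - 2 * j * t := by ring
    rw [cosOddDivCos, cosOddDivCos, ih, this, cos_nat_mul_two_pi_sub]

theorem sum_mul_cosOddDivCos_nonneg {s : Finset ℕ} {a : ℕ → ℝ}
    (h : ∀ t ∈ Set.Icc 0 (π / 2), 0 ≤ ∑ j ∈ s, a j * cos ((2 * j - 1) * t)) :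
    ∀ t ∈ Set.Icc 0 π, 0 ≤ ∑ j ∈ s, a j * cosOddDivCos j t := by
  set G : ℝ → ℝ := fun t => ∑ j ∈ s, a j * cosOddDivCos j t
  have hG : Continuous G :=
    continuous_finsetSum _ fun j _ => (continuous_cosOddDivCos j).const_mul _
  have hcosG : ∀ t, cos t * G t = ∑ j ∈ s, a j * cos ((2 * j - 1) * t) := fun t => by
    simp only [G, mul_sum, ← cos_mul_cosOddDivCos]
    exact sum_congr rfl fun _ _ => by ring
  have hIco : Set.Ico 0 (π / 2) ⊆ {t | 0 ≤ G t} := fun t ht =>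
    nonneg_of_mul_nonneg_right ((hcosG t).symm ▸ h t (Set.Ico_subset_Icc_self ht))
      (cos_pos_of_mem_Ioo ⟨by linarith [ht.1, pi_pos], ht.2⟩)
  have hIcc : Set.Icc 0 (π / 2) ⊆ {t | 0 ≤ G t} := by
    rw [← closure_Ico (by positivity)]
    exact (isClosed_le continuous_const hG).closure_subset_iff.mpr hIco
  intro t ⟨ht0, htπ⟩
  rcases le_total t (π / 2) with ht | ht
  · exact hIcc ⟨ht0, ht⟩
  · have := hIcc ⟨by linarith, by linarith⟩ (a := π - t)
    simpa [G, cosOddDivCos_pi_sub] using this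

/-- The zeros `(2k+1)π/(2n)` of `cos (n t)` in `(0, π)`. -/
noncomputable def chebNode (n k : ℕ) : ℝ := (2 * k + 1) * π / (2 * n)

theorem sum_cos_two_mul_chebNode {n m : ℕ} (hm : 0 < m) (hmn : m < n) :
    ∑ k ∈ range n, cos (2 * m * chebNode n k) = 0 := by
  have hn : (0 : ℝ) < n := by exact_mod_cast hm.trans hmn
  set x : ℝ := m * π / n
  have hx : sin x ≠ 0 := by
    refine (sin_pos_of_pos_of_lt_pi (by positivity) ?_).ne'
    rw [div_lt_iff₀ hn]
    nlinarith [pi_pos, (by exact_mod_cast hmn : (m : ℝ) < n)]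
  -- `2 sin x cos ((2k+1)x) = sin ((2k+2)x) - sin (2kx)` telescopes to `sin (2mπ) = 0`.
  have htel : 2 * sin x * ∑ k ∈ range n, cos (2 * m * chebNode n k)
      = ∑ k ∈ range n, (sin (2 * (k + 1 : ℕ) * x) - sin (2 * k * x)) := by
    rw [mul_sum]
    refine sum_congr rfl fun k _ => ?_
    have hnode : 2 * m * chebNode n k = (2 * k + 1) * x := by
      simp only [chebNode, x]; field_simp
    rw [hnode, show 2 * ((k + 1 : ℕ) : ℝ) * x = (2 * k + 1) * x + x by push_cast; ring,
      show 2 * (k : ℝ) * x = (2 * k + 1) * x - x by ring, sin_add, sin_sub]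
    ring
  rw [sum_range_sub (fun k : ℕ => sin (2 * k * x)), show 2 * (n : ℝ) * x = (2 * m : ℕ) * π by
    simp only [x]; push_cast; field_simp, sin_nat_mul_pi] at htel
  simpa [hx] using htel

theorem sum_cosOddDivCos_chebNode {n j : ℕ} (hj : 1 ≤ j) (hjn : j < n) :
    ∑ k ∈ range n, cosOddDivCos j (chebNode n k) = (-1) ^ (j + 1) * n := by
  induction j, hj using Nat.le_induction with
  | base =>
    simp only [cosOddDivCos, Nat.cast_zero, mul_zero, zero_mul, cos_zero, sum_const, card_range,
      nsmul_eq_mul]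
    ring
  | succ j hj ih =>
    simp only [cosOddDivCos, sum_sub_distrib, ← mul_sum]
    rw [sum_cos_two_mul_chebNode hj (by omega), ih (by omega), pow_succ]
    ring

theorem sum_two_mul_cos_mul_cos_chebNode {n j : ℕ} (hj : 1 ≤ j) (hjn : j < n) :
    ∑ k ∈ range n, 2 * cos (chebNode n k) * cos ((2 * j - 1) * chebNode n k)
      = if j = 1 then (n : ℝ) else 0 := by
  have hprod : ∀ t : ℝ, 2 * cos t * cos ((2 * j - 1) * t)
      = cos (2 * j * t) + cos (2 * (j - 1 : ℕ) * t) := fun t => by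
    rw [Nat.cast_sub hj, show 2 * (j : ℝ) * t = (2 * j - 1) * t + t by ring,
      show 2 * ((j : ℝ) - (1 : ℕ)) * t = (2 * j - 1) * t - t by push_cast; ring,
      cos_add, cos_sub]
    ring
  simp only [hprod, sum_add_distrib]
  rw [sum_cos_two_mul_chebNode (by omega) hjn]
  split_ifs with h
  · simp [h]
  · rw [sum_cos_two_mul_chebNode (by omega) (by omega)]; simp

theorem chebNode_mem_Icc {n k : ℕ} (hk : k < n) :
    chebNode n k ∈ Set.Icc (chebNode n 0) (π - chebNode n 0) := by
  have hn : (0 : ℝ) < n := by exact_mod_cast (k.zero_le.trans_lt hk)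
  have hk' : (k : ℝ) + 1 ≤ n := by exact_mod_cast hk
  simp only [chebNode, Nat.cast_zero, Set.mem_Icc]
  constructor <;> rw [← sub_nonneg] <;> field_simp <;>
    nlinarith [pi_pos, k.cast_nonneg (α := ℝ)]

theorem cos_sq_chebNode_le {n k : ℕ} (hk : k < n) :
    cos (chebNode n k) ^ 2 ≤ cos (chebNode n 0) ^ 2 := by
  set θ := chebNode n 0
  set t := chebNode n k
  obtain ⟨hθt, htθ⟩ : t ∈ Set.Icc θ (π - θ) := chebNode_mem_Icc hk
  have hθ : 0 ≤ θ := by unfold θ chebNode; positivity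
  have hdiff : cos t ^ 2 - cos θ ^ 2 = sin (θ - t) * sin (θ + t) := by
    rw [sin_sub, sin_add]
    linear_combination (-cos t ^ 2) * sin_sq_add_cos_sq θ + cos θ ^ 2 * sin_sq_add_cos_sq t
  have hminus : sin (θ - t) ≤ 0 := sin_nonpos_of_nonpos_of_neg_pi_le (by linarith) (by linarith)
  have hplus : 0 ≤ sin (θ + t) := sin_nonneg_of_nonneg_of_le_pi (by linarith) (by linarith)
  nlinarith

theorem sum_chebNode_weight_mul_sum {N : ℕ} (hN : 1 ≤ N) (a : ℕ → ℝ) :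
    ∑ k ∈ range (N + 1), (cos (chebNode (N + 1) 0) ^ 2 - cos (chebNode (N + 1) k) ^ 2) *
        ∑ j ∈ Icc 1 N, a j * cosOddDivCos j (chebNode (N + 1) k)
      = (N + 1) *
          (cos (chebNode (N + 1) 0) ^ 2 * ∑ j ∈ Icc 1 N, (-1) ^ (j + 1) * a j - a 1 / 2) := by
  set c := cos (chebNode (N + 1) 0) ^ 2
  have hterm : ∀ k j,
      (c - cos (chebNode (N + 1) k) ^ 2) * (a j * cosOddDivCos j (chebNode (N + 1) k))
        = a j * (c * cosOddDivCos j (chebNode (N + 1) k) -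
            2 * cos (chebNode (N + 1) k) * cos ((2 * j - 1) * chebNode (N + 1) k) / 2) :=
    fun k j => by
    rw [← cos_mul_cosOddDivCos]; ring
  simp only [mul_sum, hterm]
  rw [sum_comm]
  have hj : ∀ j ∈ Icc 1 N,
      ∑ k ∈ range (N + 1), a j * (c * cosOddDivCos j (chebNode (N + 1) k) -
          2 * cos (chebNode (N + 1) k) * cos ((2 * j - 1) * chebNode (N + 1) k) / 2)
      = (N + 1) * (c * ((-1) ^ (j + 1) * a j)) - if j = 1 then (N + 1) * a 1 / 2 else 0 := by
    intro j hj
    obtain ⟨hj1, hjN⟩ := mem_Icc.mp hj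
    rw [← mul_sum, sum_sub_distrib, ← mul_sum, ← sum_div,
      sum_cosOddDivCos_chebNode hj1 (by omega), sum_two_mul_cos_mul_cos_chebNode hj1 (by omega)]
    split_ifs with h
    · subst h; push_cast; ring
    · push_cast; ring
  rw [sum_congr rfl hj, sum_sub_distrib, ← mul_sum, ← mul_sum, sum_ite_eq',
    if_pos (mem_Icc.mpr ⟨le_rfl, hN⟩)]
  ring

theorem odd_poly_extremal_lower_bound (N : ℕ) (hN : 1 ≤ N) (a : ℕ → ℝ)
    (ha1 : a 1 = 1)
    (hpos : ∀ t ∈ Set.Icc (0 : ℝ) (π / 2),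
      0 ≤ ∑ j ∈ Finset.Icc 1 N, a j * Real.cos ((2 * (j : ℝ) - 1) * t)) :
    ∑ j ∈ Finset.Icc 1 N, (-1 : ℝ) ^ (j + 1) * a j ≥
      1 / (2 * Real.cos (π / (2 * N + 2)) ^ 2) := by
  have hθ : chebNode (N + 1) 0 = π / (2 * N + 2) := by
    rw [chebNode]; push_cast; ring
  have hG := sum_mul_cosOddDivCos_nonneg hpos
  have hquad : 0 ≤ ∑ k ∈ range (N + 1),
      (cos (chebNode (N + 1) 0) ^ 2 - cos (chebNode (N + 1) k) ^ 2) *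
        ∑ j ∈ Icc 1 N, a j * cosOddDivCos j (chebNode (N + 1) k) := by
    refine sum_nonneg fun k hk => mul_nonneg ?_ ?_
    · exact sub_nonneg.mpr (cos_sq_chebNode_le (mem_range.mp hk))
    · obtain ⟨hθt, htθ⟩ := chebNode_mem_Icc (mem_range.mp hk)
      have : 0 ≤ chebNode (N + 1) 0 := by rw [hθ]; positivity
      exact hG _ ⟨by linarith, by linarith⟩
  rw [sum_chebNode_weight_mul_sum hN, ha1, hθ] at hquad
  have hcos : 0 < cos (π / (2 * N + 2)) := by
    refine cos_pos_of_mem_Ioo ⟨by linarith [pi_pos, (by positivity : 0 < π / (2 * N + 2))], ?_⟩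
    have : (1 : ℝ) ≤ N := by exact_mod_cast hN
    exact div_lt_div_of_pos_left pi_pos two_pos (by linarith)
  rw [ge_iff_le, div_le_iff₀ (by positivity)]
  nlinarith [N.cast_nonneg (α := ℝ)]
end

section
/- Let N ≥ 1 and let U_k denote the Chebyshev polynomial of the second kind of degree k, with U′_k its derivative. Then for every j = 1, …, N, ((N−j+2)·sin(πj/(N+1)) − (N−j+1)·sin(π(j−1)/(N+1))) / ((N+1)·sin(π/(N+1))) = U′_{2(N−j+1)}(cos(π/(2N+2))) / U′_{2N}(cos(π/(2N+2))). -/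
open Real Polynomial Polynomial.Chebyshev

/-!
Evaluating `(n + 1) T_{n+1} = X U_n - (1 - X²) U_n'` at `cos θ` and using
`U_n(cos θ) sin θ = sin ((n + 1) θ)` gives
`2 U_n'(cos θ) sin³ θ = (n + 2) sin (n θ) - n sin ((n + 2) θ)`.
At `θ = π / (2N + 2)` the right-hand side is twice the numerator of the left-hand quotient for
`n = 2 (N - j + 1)`, and twice its denominator for `n = 2N`; cancelling `sin³ θ` gives the claim.
-/

lemma derivative_U_real_cos_mul_sin_sq (n : ℤ) (θ : ℝ) :
    (derivative (U ℝ n)).eval (cos θ) * sin θ ^ 2 =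
      (U ℝ n).eval (cos θ) * cos θ - (n + 1) * cos ((n + 1) * θ) := by
  have h := congr_arg (eval (cos θ)) (add_one_mul_T_eq_poly_in_U (R := ℝ) n)
  simp only [eval_mul, eval_add, eval_sub, eval_pow, eval_X, eval_one, eval_intCast,
    T_real_cos, Int.cast_add, Int.cast_one] at h
  rw [sin_sq]
  linear_combination h

lemma two_mul_derivative_U_real_cos_mul_sin_pow_three (n : ℤ) (θ : ℝ) :
    2 * ((derivative (U ℝ n)).eval (cos θ) * sin θ ^ 3) =
      (n + 2) * sin (n * θ) - n * sin ((n + 2) * θ) := by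
  have hsub : sin (n * θ) = sin ((n + 1) * θ - θ) := by ring_nf
  have hadd : sin ((n + 2) * θ) = sin ((n + 1) * θ + θ) := by ring_nf
  rw [hsub, hadd, sin_sub, sin_add]
  linear_combination (2 * sin θ) * derivative_U_real_cos_mul_sin_sq n θ
    + 2 * cos θ * U_real_cos θ n

theorem extremal_coeffs_chebyshev_form_general (N : ℕ) :
    ∀ j ∈ Finset.Icc 1 N,
      (((N : ℝ) - j + 2) * Real.sin (π * j / (N + 1)) -
        ((N : ℝ) - j + 1) * Real.sin (π * (j - 1) / (N + 1))) /
      ((N + 1) * Real.sin (π / (N + 1))) =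
      (Polynomial.derivative (Polynomial.Chebyshev.U ℝ (2 * ((N : ℤ) - j + 1)))).eval
          (Real.cos (π / (2 * N + 2))) /
      (Polynomial.derivative (Polynomial.Chebyshev.U ℝ (2 * N))).eval
          (Real.cos (π / (2 * N + 2))) := by
  intro j _
  set t := π / (2 * N + 2) with ht
  have hsin : sin t ≠ 0 := by
    refine (sin_pos_of_pos_of_lt_pi (by positivity) ?_).ne'
    rw [ht, div_lt_iff₀ (by positivity)]
    nlinarith [pi_pos, (N.cast_nonneg : (0 : ℝ) ≤ N)]
  have hnum := two_mul_derivative_U_real_cos_mul_sin_pow_three (2 * ((N : ℤ) - j + 1)) t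
  have hden := two_mul_derivative_U_real_cos_mul_sin_pow_three (2 * N) t
  push_cast at hnum hden
  have hj_angle : 2 * ((N : ℝ) - j + 1) * t = π - π * j / (N + 1) := by
    rw [ht]; field_simp; ring
  have hj_pred_angle : (2 * ((N : ℝ) - j + 1) + 2) * t = π - π * (j - 1) / (N + 1) := by
    rw [ht]; field_simp; ring
  have hN_angle : 2 * (N : ℝ) * t = π - π / (N + 1) := by rw [ht]; field_simp; ring
  have hpi_angle : (2 * (N : ℝ) + 2) * t = π := by rw [ht]; field_simp
  rw [hj_angle, hj_pred_angle, sin_pi_sub, sin_pi_sub] at hnum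
  rw [hN_angle, hpi_angle, sin_pi_sub, sin_pi] at hden
  symm
  rw [← mul_div_mul_right _ _ (pow_ne_zero 3 hsin)]
  congr 1 <;> linarith

theorem extremal_coeffs_chebyshev_form (N : ℕ) (hN : 1 ≤ N) :
    ∀ j ∈ Finset.Icc 1 N,
      (((N : ℝ) - j + 2) * Real.sin (π * j / (N + 1)) -
        ((N : ℝ) - j + 1) * Real.sin (π * (j - 1) / (N + 1))) /
      ((N + 1) * Real.sin (π / (N + 1))) =
      (Polynomial.derivative (Polynomial.Chebyshev.U ℝ (2 * ((N : ℤ) - j + 1)))).eval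
          (Real.cos (π / (2 * N + 2))) /
      (Polynomial.derivative (Polynomial.Chebyshev.U ℝ (2 * N))).eval
          (Real.cos (π / (2 * N + 2))) :=
  extremal_coeffs_chebyshev_form_general N
end

section
/- Let N ≥ 1 and let F⁰(z) = ∑_{j=1}^{N} a⁰_j z^{2j−1} with a⁰_j = ((N−j+2)·sin(πj/(N+1)) − (N−j+1)·sin(π(j−1)/(N+1)))/((N+1)·sin(π/(N+1))). Then for every complex z with z⁴ − 2z²·cos(π/(N+1)) + 1 ≠ 0, F⁰(z) = z·(4z²·(z^{2N+2}(1+z²) + N(1−z²) + 2)·sin²(π/(2N+2)) + (N+1)(1−z²)³) / ((N+1)·(z⁴ − 2z²·cos(π/(N+1)) + 1)²). -/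
open Real Finset

/-!
Put `θ = π / (N + 1)` and `s k = sin (k θ)`. Then `(N + 1) sin θ · a⁰_(i+1) = (N + 1 - i) s (i+1) - (N - i) s i`,
so `(N + 1) sin θ · z F⁰(z)` is the combination `(N + 2 - N x) P(x) - (1 - x) Q(x)` at `x = z²` of the truncated
generating functions `P(x) = ∑_{i ≤ N} s i xⁱ` and `Q(x) = ∑_{i ≤ N} i s i xⁱ = x P'(x)`.
Since `s (k + 2) = 2 cos θ s (k + 1) - s k`, multiplying `P` by `x² - 2 x cos θ + 1` (and `Q` by its square)
telescopes to boundary terms in `s 1`, `s N = s 1` and `s (N + 1) = 0`; `sin² (θ / 2) = (1 - cos θ) / 2`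
finishes the computation.
-/

section SecondOrderRecurrence

variable {R : Type*} [CommRing R] {s : ℕ → R} {c : R}

theorem quadratic_mul_sum_range_mul_pow (hs0 : s 0 = 0)
    (hrec : ∀ k, s (k + 2) = 2 * c * s (k + 1) - s k) (M : ℕ) (x : R) :
    (x ^ 2 - 2 * c * x + 1) * ∑ i ∈ range (M + 1), s i * x ^ i
      = s 1 * x - s (M + 1) * x ^ (M + 1) + s M * x ^ (M + 2) := by
  induction M with
  | zero => simp [hs0]
  | succ n ih =>
    rw [sum_range_succ, mul_add, ih, hrec n]
    ring

theorem quadratic_sq_mul_sum_range_nat_mul_mul_pow (hs0 : s 0 = 0)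
    (hrec : ∀ k, s (k + 2) = 2 * c * s (k + 1) - s k) (M : ℕ) (x : R) :
    (x ^ 2 - 2 * c * x + 1) ^ 2 * ∑ i ∈ range (M + 1), (i : R) * s i * x ^ i
      = x * ((s 1 - (M + 1) * s (M + 1) * x ^ M + (M + 2) * s M * x ^ (M + 1))
            * (x ^ 2 - 2 * c * x + 1)
          - (s 1 * x - s (M + 1) * x ^ (M + 1) + s M * x ^ (M + 2)) * (2 * x - 2 * c)) := by
  induction M with
  | zero => simp [hs0]
  | succ n ih =>
    rw [sum_range_succ, mul_add, ih, hrec n]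
    push_cast
    ring

theorem sum_range_sub_mul_pow_succ (hs0 : s 0 = 0) (K n : ℕ) (x : R) :
    ∑ i ∈ range n, ((K + 1 - i) * s (i + 1) - (K - i) * s i) * x ^ (i + 1)
      = (K + 2 - K * x) * ∑ i ∈ range (n + 1), s i * x ^ i
        - (1 - x) * ∑ i ∈ range (n + 1), (i : R) * s i * x ^ i + (K - n) * s n * x ^ (n + 1) := by
  induction n with
  | zero => simp [hs0]
  | succ n ih =>
    rw [sum_range_succ, ih, sum_range_succ _ (n + 1), sum_range_succ _ (n + 1)]
    push_cast
    ring

theorem quadratic_sq_mul_sum_range_sub_mul_pow_succ (hs0 : s 0 = 0)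
    (hrec : ∀ k, s (k + 2) = 2 * c * s (k + 1) - s k) {N : ℕ} (hN1 : s (N + 1) = 0)
    (hN : s N = s 1) (x : R) :
    (x ^ 2 - 2 * c * x + 1) ^ 2 *
        ∑ i ∈ range N, ((N + 1 - i) * s (i + 1) - (N - i) * s i) * x ^ (i + 1)
      = s 1 * x * (2 * x * (x ^ (N + 1) * (1 + x) + N * (1 - x) + 2) * (1 - c)
          + (N + 1) * (1 - x) ^ 3) := by
  have hP := quadratic_mul_sum_range_mul_pow hs0 hrec N x
  have hQ := quadratic_sq_mul_sum_range_nat_mul_mul_pow hs0 hrec N x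
  rw [hN1, hN] at hP hQ
  rw [sum_range_sub_mul_pow_succ hs0, hN]
  linear_combination (N + 2 - N * x) * (x ^ 2 - 2 * c * x + 1) * hP - (1 - x) * hQ

end SecondOrderRecurrence

theorem mul_sum_Icc_mul_pow_two_mul_sub_one {R : Type*} [CommSemiring R] (f : ℕ → R) (z : R)
    (N : ℕ) :
    z * ∑ j ∈ Icc 1 N, f j * z ^ (2 * j - 1) = ∑ i ∈ range N, f (i + 1) * (z ^ 2) ^ (i + 1) := by
  rw [← Ico_add_one_right_eq_Icc, sum_Ico_eq_sum_range, mul_sum]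
  refine sum_congr rfl fun i _ => ?_
  rw [add_comm 1 i, show 2 * (i + 1) - 1 = 2 * i + 1 by omega]
  ring

theorem sin_nat_add_two_mul (k : ℕ) (θ : ℝ) :
    sin ((k + 2) * θ) = 2 * cos θ * sin ((k + 1) * θ) - sin (k * θ) := by
  rw [show ((k : ℝ) + 2) * θ = (k + 1) * θ + θ by ring,
    show (k : ℝ) * θ = (k + 1) * θ - θ by ring, sin_add, sin_sub]
  ring

theorem sin_sq_half (x : ℝ) : sin (x / 2) ^ 2 = (1 - cos x) / 2 := by
  rw [sin_sq_eq_half_sub, mul_div_cancel₀ x two_ne_zero]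
  ring

theorem sin_pi_div_nat_succ_pos {N : ℕ} (hN : 1 ≤ N) : 0 < sin (π / (N + 1)) :=
  sin_pos_of_pos_of_lt_pi (by positivity) (div_lt_self pi_pos (by norm_cast; omega))

section SineSequence

variable {N : ℕ} {s : ℕ → ℂ}

theorem quadratic_sq_mul_sum_sin_mul_pow (hs : ∀ k : ℕ, s k = Real.sin (k * (π / (N + 1))))
    (x : ℂ) :
    (x ^ 2 - 2 * Real.cos (π / (N + 1)) * x + 1) ^ 2 *
        ∑ i ∈ range N, ((N + 1 - i) * s (i + 1) - (N - i) * s i) * x ^ (i + 1)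
      = s 1 * x * (2 * x * (x ^ (N + 1) * (1 + x) + N * (1 - x) + 2) *
          (1 - Real.cos (π / (N + 1))) + (N + 1) * (1 - x) ^ 3) := by
  have hθ : ((N : ℝ) + 1) * (π / (N + 1)) = π := by field_simp
  refine quadratic_sq_mul_sum_range_sub_mul_pow_succ (by simp [hs]) (fun k => ?_) ?_ ?_ x
  · simp only [hs]
    push_cast
    exact_mod_cast congrArg Complex.ofReal (sin_nat_add_two_mul k _)
  · rw [hs]
    push_cast [-Complex.ofReal_sin]
    rw [hθ, sin_pi, Complex.ofReal_zero]
  · rw [hs, hs, show N * (π / (N + 1)) = π - π / (N + 1) by linarith, sin_pi_sub,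
      Nat.cast_one, one_mul]

theorem ofReal_coeff_succ_eq {a0 : ℕ → ℝ}
    (ha0 : ∀ j, a0 j =
      (((N : ℝ) - j + 2) * Real.sin (π * j / (N + 1)) -
        ((N : ℝ) - j + 1) * Real.sin (π * (j - 1) / (N + 1))) /
      ((N + 1) * Real.sin (π / (N + 1))))
    (hs : ∀ k : ℕ, s k = Real.sin (k * (π / (N + 1)))) (i : ℕ) :
    (a0 (i + 1) : ℂ) = ((N + 1 - i) * s (i + 1) - (N - i) * s i) / ((N + 1) * s 1) := by
  simp only [hs, ha0]
  push_cast [-Complex.ofReal_sin]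
  ring_nf

end SineSequence

theorem extremal_poly_closed_form (N : ℕ) (hN : 1 ≤ N) (a0 : ℕ → ℝ)
    (ha0 : ∀ j, a0 j =
      (((N : ℝ) - j + 2) * Real.sin (π * j / (N + 1)) -
        ((N : ℝ) - j + 1) * Real.sin (π * (j - 1) / (N + 1))) /
      ((N + 1) * Real.sin (π / (N + 1))))
    (z : ℂ)
    (hz : z ^ 4 - 2 * z ^ 2 * (Real.cos (π / (N + 1)) : ℂ) + 1 ≠ 0) :
    ∑ j ∈ Finset.Icc 1 N, (a0 j : ℂ) * z ^ (2 * j - 1) =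
      z * (4 * z ^ 2 * (z ^ (2 * N + 2) * (1 + z ^ 2) + N * (1 - z ^ 2) + 2) *
            (Real.sin (π / (2 * N + 2)) : ℂ) ^ 2 + (N + 1) * (1 - z ^ 2) ^ 3) /
        ((N + 1) * (z ^ 4 - 2 * z ^ 2 * (Real.cos (π / (N + 1)) : ℂ) + 1) ^ 2) := by
  rcases eq_or_ne z 0 with rfl | hz0
  · rw [zero_mul, zero_div]
    exact sum_eq_zero fun j hj => by
      rw [zero_pow (by have := (mem_Icc.mp hj).1; omega), mul_zero]
  obtain ⟨s, hs⟩ : ∃ s : ℕ → ℂ, ∀ k : ℕ, s k = Real.sin (k * (π / (N + 1))) := ⟨_, fun _ => rfl⟩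
  have hs1 : s 1 ≠ 0 := by
    rw [hs, Nat.cast_one, one_mul]
    exact_mod_cast (sin_pi_div_nat_succ_pos hN).ne'
  have hhalf : (Real.sin (π / (2 * N + 2)) : ℂ) ^ 2 = (1 - Real.cos (π / (N + 1))) / 2 := by
    rw [show π / (2 * N + 2) = π / (N + 1) / 2 by field_simp]
    exact_mod_cast sin_sq_half _
  have hF : (N + 1) * s 1 * (z * ∑ j ∈ Icc 1 N, (a0 j : ℂ) * z ^ (2 * j - 1))
      = ∑ i ∈ range N, ((N + 1 - i) * s (i + 1) - (N - i) * s i) * (z ^ 2) ^ (i + 1) := by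
    rw [mul_sum_Icc_mul_pow_two_mul_sub_one, mul_sum]
    refine sum_congr rfl fun i _ => ?_
    rw [ofReal_coeff_succ_eq ha0 hs]
    field_simp
  have key := quadratic_sq_mul_sum_sin_mul_pow hs (z ^ 2)
  rw [eq_div_iff (mul_ne_zero (Nat.cast_add_one_ne_zero N) (pow_ne_zero 2 hz)), hhalf]
  apply mul_left_cancel₀ (mul_ne_zero hs1 hz0)
  rw [← hF] at key
  linear_combination key
end

section
/- Let N ≥ 1 and let F⁰(z) = ∑_{j=1}^{N} a⁰_j z^{2j−1} with a⁰_j = ((N−j+2)·sin(πj/(N+1)) − (N−j+1)·sin(π(j−1)/(N+1)))/((N+1)·sin(π/(N+1))). Then for all t ∈ [0, π/2], the imaginary part of F⁰(e^{it}) is nonnegative: Im F⁰(e^{it}) ≥ 0. -/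
/-!
Multiplying by `sin t`, the product-to-sum identity
`sin t * sin ((2j-1) t) = sin² (j t) - sin² ((j-1) t)` turns `Im F⁰(e^{it})` into
`∑ a⁰_j (g_j - g_{j-1})` with `g_j = sin² (j t) ≥ 0` and `g_0 = 0`. Abel summation rewrites it as
`∑ (a⁰_j - a⁰_{j+1}) g_j + a⁰_{N+1} g_N`, and the coefficients are nonincreasing with
`a⁰_{N+1} = 0`, since `a⁰_j - a⁰_{j+1}` is a positive multiple of `(N-j+1) sin (πj/(N+1))`.
-/

open Real Finset

lemma exp_ofReal_mul_I_pow_im (t : ℝ) (n : ℕ) :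
    (Complex.exp (t * Complex.I) ^ n).im = sin (n * t) := by
  rw [← Complex.exp_nat_mul, ← mul_assoc, ← Complex.ofReal_natCast, ← Complex.ofReal_mul,
    Complex.exp_ofReal_mul_I_im]

lemma sin_sq_sub_sin_sq (a b : ℝ) : sin a ^ 2 - sin b ^ 2 = sin (a + b) * sin (a - b) := by
  rw [sin_add, sin_sub]
  nlinarith [sin_sq_add_cos_sq a, sin_sq_add_cos_sq b]

lemma sin_nat_mul_eq_zero {t : ℝ} (ht : sin t = 0) (n : ℕ) : sin (n * t) = 0 := by
  obtain ⟨k, rfl⟩ := sin_eq_zero_iff.mp ht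
  simpa [mul_assoc] using sin_int_mul_pi (n * k)

lemma sin_mul_sin_two_mul_sub_one (t : ℝ) {j : ℕ} (hj : 1 ≤ j) :
    sin t * sin ((2 * j - 1 : ℕ) * t) = sin (j * t) ^ 2 - sin ((j - 1 : ℕ) * t) ^ 2 := by
  rw [sin_sq_sub_sin_sq, Nat.cast_sub hj, Nat.cast_sub (by omega : 1 ≤ 2 * j)]
  push_cast
  ring_nf

lemma sum_Icc_mul_sub (a g : ℕ → ℝ) (hg : g 0 = 0) (M : ℕ) :
    ∑ j ∈ Icc 1 M, a j * (g j - g (j - 1)) =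
      ∑ j ∈ Icc 1 M, (a j - a (j + 1)) * g j + a (M + 1) * g M := by
  induction M with
  | zero => simp [hg]
  | succ M ih =>
    rw [sum_Icc_succ_top (by omega), sum_Icc_succ_top (by omega), ih, Nat.add_sub_cancel]
    ring

lemma sum_Icc_mul_sub_nonneg {a g : ℕ → ℝ} {M : ℕ} (hg0 : g 0 = 0) (hg : ∀ j, 0 ≤ g j)
    (ha : ∀ j ∈ Icc 1 M, a (j + 1) ≤ a j) (haM : 0 ≤ a (M + 1)) :
    0 ≤ ∑ j ∈ Icc 1 M, a j * (g j - g (j - 1)) := by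
  rw [sum_Icc_mul_sub a g hg0]
  refine add_nonneg (sum_nonneg fun j hj => ?_) (mul_nonneg haM (hg M))
  exact mul_nonneg (sub_nonneg.2 (ha j hj)) (hg j)

theorem sum_mul_sin_odd_nonneg_of_antitone {a : ℕ → ℝ} {M : ℕ}
    (ha : ∀ j ∈ Icc 1 M, a (j + 1) ≤ a j) (haM : 0 ≤ a (M + 1)) {t : ℝ} (ht : 0 ≤ sin t) :
    0 ≤ ∑ j ∈ Icc 1 M, a j * sin ((2 * j - 1 : ℕ) * t) := by
  rcases ht.eq_or_lt with ht | ht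
  · simp [sin_nat_mul_eq_zero ht.symm]
  rw [← mul_nonneg_iff_of_pos_left ht, mul_sum]
  have hsum : ∑ j ∈ Icc 1 M, sin t * (a j * sin ((2 * j - 1 : ℕ) * t)) =
      ∑ j ∈ Icc 1 M, a j * (sin (j * t) ^ 2 - sin ((j - 1 : ℕ) * t) ^ 2) := by
    refine sum_congr rfl fun j hj => ?_
    rw [← sin_mul_sin_two_mul_sub_one t (mem_Icc.1 hj).1]
    ring
  rw [hsum]
  exact sum_Icc_mul_sub_nonneg (g := fun j => sin (j * t) ^ 2) (by simp)
    (fun _ => sq_nonneg _) ha haM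

noncomputable def extremalCoeff (N j : ℕ) : ℝ :=
  (((N : ℝ) - j + 2) * Real.sin (π * j / (N + 1)) -
    ((N : ℝ) - j + 1) * Real.sin (π * (j - 1) / (N + 1))) /
  ((N + 1) * Real.sin (π / (N + 1)))

lemma extremalCoeff_sub_succ (N j : ℕ) :
    extremalCoeff N j - extremalCoeff N (j + 1) =
      2 * ((N : ℝ) - j + 1) * sin (π * j / (N + 1)) * (1 - cos (π / (N + 1))) /
        ((N + 1) * sin (π / (N + 1))) := by
  have hsucc : π * ((j : ℝ) + 1) / (N + 1) = π * j / (N + 1) + π / (N + 1) := by ring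
  have hpred : π * ((j : ℝ) - 1) / (N + 1) = π * j / (N + 1) - π / (N + 1) := by ring
  simp only [extremalCoeff]
  push_cast
  rw [add_sub_cancel_right, hsucc, hpred, sin_add, sin_sub]
  ring

lemma extremalCoeff_succ_le {N j : ℕ} (hj : j ≤ N) :
    extremalCoeff N (j + 1) ≤ extremalCoeff N j := by
  have hN : (0 : ℝ) < N + 1 := by positivity
  have hjN : (j : ℝ) ≤ N := by exact_mod_cast hj
  have hsin_nonneg {x : ℝ} (hx0 : 0 ≤ x) (hx : x ≤ N + 1) : 0 ≤ sin (π * x / (N + 1)) := by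
    refine sin_nonneg_of_nonneg_of_le_pi (by positivity) ?_
    rw [div_le_iff₀ hN]
    exact mul_le_mul_of_nonneg_left hx pi_pos.le
  have hsinα : 0 ≤ sin (π / (N + 1)) := by simpa using hsin_nonneg zero_le_one (by linarith)
  rw [← sub_nonneg, extremalCoeff_sub_succ]
  have hcos : 0 ≤ 1 - cos (π / (N + 1)) := sub_nonneg.2 (cos_le_one _)
  have hj' := hsin_nonneg (Nat.cast_nonneg j) (by linarith)
  have hNj : (0 : ℝ) ≤ N - j + 1 := by linarith
  positivity

lemma extremalCoeff_self_succ (N : ℕ) : extremalCoeff N (N + 1) = 0 := by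
  have hN : (N : ℝ) + 1 ≠ 0 := by positivity
  simp [extremalCoeff, mul_div_cancel_right₀ π hN]

theorem extremal_poly_im_nonneg_general (N : ℕ) (a0 : ℕ → ℝ)
    (ha0 : ∀ j, a0 j =
      (((N : ℝ) - j + 2) * Real.sin (π * j / (N + 1)) -
        ((N : ℝ) - j + 1) * Real.sin (π * (j - 1) / (N + 1))) /
      ((N + 1) * Real.sin (π / (N + 1)))) :
    ∀ t ∈ Set.Icc (0 : ℝ) (π / 2),
      0 ≤ (∑ j ∈ Finset.Icc 1 N,
        (a0 j : ℂ) * Complex.exp (t * Complex.I) ^ (2 * j - 1)).im := by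
  obtain rfl : a0 = extremalCoeff N := funext ha0
  rintro t ⟨ht0, htpi⟩
  simp only [Complex.im_sum, Complex.im_ofReal_mul, exp_ofReal_mul_I_pow_im]
  exact sum_mul_sin_odd_nonneg_of_antitone (fun j hj => extremalCoeff_succ_le (mem_Icc.1 hj).2)
    (extremalCoeff_self_succ N).ge (sin_nonneg_of_nonneg_of_le_pi ht0 (by linarith [pi_pos]))

theorem extremal_poly_im_nonneg (N : ℕ) (hN : 1 ≤ N) (a0 : ℕ → ℝ)
    (ha0 : ∀ j, a0 j =
      (((N : ℝ) - j + 2) * Real.sin (π * j / (N + 1)) -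
        ((N : ℝ) - j + 1) * Real.sin (π * (j - 1) / (N + 1))) /
      ((N + 1) * Real.sin (π / (N + 1)))) :
    ∀ t ∈ Set.Icc (0 : ℝ) (π / 2),
      0 ≤ (∑ j ∈ Finset.Icc 1 N,
        (a0 j : ℂ) * Complex.exp (t * Complex.I) ^ (2 * j - 1)).im :=
  extremal_poly_im_nonneg_general N a0 ha0
end

section
/- For every real x with 0 < x ≤ π/7, (4/π)·x·sin(x) < 1 − cos³(x). -/
/-! Factor `1 - cos³ x = (1 - cos x)(1 + cos x + cos² x)` and bound the factors below by the
polynomials `x²/2 - 5x⁴/96` (Taylor with remainder) and `3 - 3x²/2` (from `cos x ≥ 1 - x²/2`).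
For `x ≤ π/7 < 1/2` and `π > 3.14` their product already exceeds `4x²/π ≥ 4 x sin x / π`. -/

open Real

namespace Real

lemma sq_div_two_sub_le_one_sub_cos {x : ℝ} (hx : |x| ≤ 1) :
    x ^ 2 / 2 - 5 / 96 * x ^ 4 ≤ 1 - cos x := by
  have h := (abs_le.1 (cos_bound hx)).2
  rw [Even.pow_abs (by decide)] at h
  linarith

lemma three_sub_le_one_add_cos_add_cos_sq (x : ℝ) :
    3 - 3 / 2 * x ^ 2 ≤ 1 + cos x + cos x ^ 2 := by
  have hcos := one_sub_sq_div_two_le_cos (x := x)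
  rcases le_total (x ^ 2) 2 with hx | hx
  · -- `t ↦ 1 + t + t²` is increasing on `[0, ∞)`, and `cos x ≥ 1 - x²/2 ≥ 0`
    nlinarith [mul_nonneg (sub_nonneg.2 hcos) (by linarith : 0 ≤ 2 - x ^ 2 + cos x)]
  · nlinarith [sq_nonneg (cos x + 1 / 2)]

lemma mul_le_one_sub_cos_pow_three {x : ℝ} (hx : |x| ≤ 1) :
    (x ^ 2 / 2 - 5 / 96 * x ^ 4) * (3 - 3 / 2 * x ^ 2) ≤ 1 - cos x ^ 3 := by
  have hx2 : x ^ 2 ≤ 1 := by rw [← sq_abs]; nlinarith [abs_nonneg x]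
  calc (x ^ 2 / 2 - 5 / 96 * x ^ 4) * (3 - 3 / 2 * x ^ 2)
      ≤ (1 - cos x) * (1 + cos x + cos x ^ 2) :=
        mul_le_mul (sq_div_two_sub_le_one_sub_cos hx) (three_sub_le_one_add_cos_add_cos_sq x)
          (by linarith) (by linarith [cos_le_one x])
    _ = 1 - cos x ^ 3 := by ring

lemma four_mul_sq_lt_pi_mul_one_sub_cos_pow_three {x : ℝ} (hx0 : 0 < x) (hx : x ≤ 1 / 2) :
    4 * x ^ 2 < π * (1 - cos x ^ 3) := by
  have hpoly := mul_le_one_sub_cos_pow_three (x := x) (by rw [abs_of_pos hx0]; linarith)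
  have ht0 : 0 < x ^ 2 := by positivity
  have ht : x ^ 2 ≤ 1 / 4 := by nlinarith
  have hnum : 4 * x ^ 2 < 3.14 * ((x ^ 2 / 2 - 5 / 96 * x ^ 4) * (3 - 3 / 2 * x ^ 2)) := by
    nlinarith [mul_pos ht0 ht0, mul_nonneg (mul_nonneg ht0.le ht0.le) (sub_nonneg.2 ht),
      mul_nonneg ht0.le (sub_nonneg.2 ht)]
  nlinarith [pi_gt_d2]

end Real

theorem aux_inequality (x : ℝ) (hx0 : 0 < x) (hx : x ≤ π / 7) :
    4 / π * x * Real.sin x < 1 - Real.cos x ^ 3 := by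
  have hx' : x ≤ 1 / 2 := by linarith [pi_lt_d2]
  have hsin : 4 * x * sin x < 4 * x ^ 2 := by
    nlinarith [sin_lt hx0]
  rw [div_mul_eq_mul_div, div_mul_eq_mul_div, div_lt_iff₀ pi_pos]
  linarith [four_mul_sq_lt_pi_mul_one_sub_cos_pow_three hx0 hx']
end

section
/- Let N ≥ 4 be an integer. Then for every t ∈ [π/(N+1), π/2 − π/(2N+2)), sin(t)/(sin²(t) − sin²(π/(2N+2))) < ((N+1)/2)·(cos(t) + sin²(t)/(2·cos(t))). -/
/-!
Put `a = π / (2N + 2)`, so that `(N + 1) / 2 = π / (4a)` and `t ∈ [2a, π/2 - a)`.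
Since `x ↦ x / (x² - sin² a)` decreases for `x > sin a`, the left side is at most its value at
`x = sin 2a = 2 sin a cos a`, namely `2 cos a / (sin a (4 cos² a - 1))`; this is below `π / (4a)`
by Taylor bounds on `sin` and `cos`, valid as `a ≤ π / 10`. On the right,
`cos t + sin² t / (2 cos t) = (1 + cos² t) / (2 cos t) ≥ 1`.
-/

open Real Set

lemma antitoneOn_div_sq_sub_sq {s : ℝ} (hs : 0 ≤ s) :
    AntitoneOn (fun x : ℝ ↦ x / (x ^ 2 - s ^ 2)) (Ioi s) := by
  intro y hy x hx hyx
  simp only [mem_Ioi] at hx hy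
  have hy' : 0 < y ^ 2 - s ^ 2 := by nlinarith
  have hx' : 0 < x ^ 2 - s ^ 2 := by nlinarith
  rw [div_le_div_iff₀ hx' hy']
  nlinarith [mul_nonneg (sub_nonneg.2 hyx) (by nlinarith : 0 ≤ x * y + s ^ 2)]

lemma one_le_cos_add_sin_sq_div {t : ℝ} (ht : 0 < cos t) :
    1 ≤ cos t + sin t ^ 2 / (2 * cos t) := by
  have h : cos t + sin t ^ 2 / (2 * cos t) = 1 + (1 - cos t) ^ 2 / (2 * cos t) := by
    field_simp
    nlinarith [sin_sq_add_cos_sq t]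
  rw [h]
  exact le_add_of_nonneg_right (by positivity)

lemma mul_cos_lt_pi_mul_sin_mul {a : ℝ} (ha : 0 < a) (ha' : a ≤ π / 10) :
    8 * a * cos a < π * sin a * (4 * cos a ^ 2 - 1) := by
  have hπ : 3.14 < π := pi_gt_d2
  have hπ' : π < 3.15 := pi_lt_d2
  have ha2 : a ^ 2 ≤ 0.1 := by nlinarith
  have hcos : cos a ≤ 1 - a ^ 2 / 2 + a ^ 4 * (5 / 96) := by
    have := (abs_le.1 (cos_bound (x := a) (by rw [abs_of_pos ha]; linarith))).2
    rw [abs_of_pos ha] at this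
    linarith
  have hsin : a - a ^ 3 / 6 < sin a := sin_gt_sub_cube ha
  have hsin_sq : sin a ^ 2 < a ^ 2 := sin_sq_lt_sq ha.ne'
  have hfactor : 3 - 4 * a ^ 2 < 4 * cos a ^ 2 - 1 := by nlinarith [sin_sq_add_cos_sq a]
  have hpoly : 8 * (1 - a ^ 2 / 2 + a ^ 4 * (5 / 96)) < π * (1 - a ^ 2 / 6) * (3 - 4 * a ^ 2) := by
    nlinarith [sq_nonneg a, mul_nonneg (sq_nonneg a) (sq_nonneg a)]
  have hprod : (a - a ^ 3 / 6) * (3 - 4 * a ^ 2) < sin a * (4 * cos a ^ 2 - 1) :=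
    mul_lt_mul'' hsin hfactor (by nlinarith) (by nlinarith)
  calc 8 * a * cos a ≤ a * (8 * (1 - a ^ 2 / 2 + a ^ 4 * (5 / 96))) := by nlinarith
    _ < a * (π * (1 - a ^ 2 / 6) * (3 - 4 * a ^ 2)) := mul_lt_mul_of_pos_left hpoly ha
    _ = π * ((a - a ^ 3 / 6) * (3 - 4 * a ^ 2)) := by ring
    _ < π * (sin a * (4 * cos a ^ 2 - 1)) := mul_lt_mul_of_pos_left hprod pi_pos
    _ = π * sin a * (4 * cos a ^ 2 - 1) := by ring

lemma sin_two_mul_div_sq_sub_sq_lt {a : ℝ} (ha : 0 < a) (ha' : a ≤ π / 10) :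
    sin (2 * a) / (sin (2 * a) ^ 2 - sin a ^ 2) < π / (4 * a) := by
  have hs : 0 < sin a := sin_pos_of_pos_of_lt_pi ha (by linarith [pi_pos])
  have hc : 1 / 2 < cos a := by
    rw [← cos_pi_div_three]
    exact cos_lt_cos_of_nonneg_of_le_pi_div_two ha.le (by linarith [pi_pos]) (by linarith [pi_pos])
  have hden : sin (2 * a) ^ 2 - sin a ^ 2 = sin a ^ 2 * (4 * cos a ^ 2 - 1) := by
    rw [sin_two_mul]; ring
  have hc' : 0 < 4 * cos a ^ 2 - 1 := by nlinarith
  rw [hden, sin_two_mul, div_lt_div_iff₀ (by positivity) (by positivity)]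
  nlinarith [mul_cos_lt_pi_mul_sin_mul ha ha']

theorem key_estimate_sinq (N : ℕ) (hN : 4 ≤ N) :
    ∀ t : ℝ, π / (N + 1) ≤ t → t < π / 2 - π / (2 * N + 2) →
      Real.sin t / (Real.sin t ^ 2 - Real.sin (π / (2 * N + 2)) ^ 2) <
        (N + 1) / 2 * (Real.cos t + Real.sin t ^ 2 / (2 * Real.cos t)) := by
  intro t ht₁ ht₂
  have hN' : (4 : ℝ) ≤ N := by exact_mod_cast hN
  set a := π / (2 * N + 2) with ha_def
  have ha : 0 < a := by positivity
  have ha' : a ≤ π / 10 := div_le_div_of_nonneg_left pi_pos.le (by norm_num) (by linarith)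
  have h2a : π / (N + 1) = 2 * a := by rw [ha_def]; field_simp
  have hN_eq : ((N : ℝ) + 1) / 2 = π / (4 * a) := by rw [ha_def]; field_simp; ring
  have hsin_a : sin a < sin (2 * a) :=
    strictMonoOn_sin ⟨by linarith, by linarith⟩ ⟨by linarith, by linarith⟩ (by linarith)
  have hsin_t : sin (2 * a) ≤ sin t :=
    strictMonoOn_sin.monotoneOn ⟨by linarith, by linarith⟩ ⟨by linarith, by linarith⟩ (h2a ▸ ht₁)
  have hcos_t : 0 < cos t := cos_pos_of_mem_Ioo ⟨by linarith, by linarith⟩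
  calc sin t / (sin t ^ 2 - sin a ^ 2)
      ≤ sin (2 * a) / (sin (2 * a) ^ 2 - sin a ^ 2) :=
        antitoneOn_div_sq_sub_sq (sin_pos_of_pos_of_lt_pi ha (by linarith)).le
          hsin_a (hsin_a.trans_le hsin_t) hsin_t
    _ < π / (4 * a) := sin_two_mul_div_sq_sub_sq_lt ha ha'
    _ = (N + 1) / 2 := hN_eq.symm
    _ ≤ (N + 1) / 2 * (cos t + sin t ^ 2 / (2 * cos t)) :=
        le_mul_of_one_le_right (by positivity) (one_le_cos_add_sin_sq_div hcos_t)
end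

section
/- Let N ≥ 1 and let F(z) = ∑_{j=1}^{N} a_j z^{2j−1} be an odd polynomial with real coefficients a_j, a_1 = 1, which is injective on the open unit disc {z ∈ ℂ : |z| < 1}. Then ∑_{j=1}^{N} (−1)^{j+1} a_j ≥ 1/(2·cos²(π/(2N+2))); equivalently, −i·F(i) ≥ 1/(2·cos²(π/(2N+2))). -/
/-!
With `c i = (-1)^i a (i+1)`, the rotated polynomial `G(z) = i F(-iz) = ∑ c i z^(2i+1)` is again
univalent with real coefficients, `G'(0) = 1` and `-i F(i) = ∑ c i`. Such a `G` is typically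
real: `Im G` cannot vanish on the upper half-disc (injectivity plus `G(z̄) = conj G(z)`) and is
positive near `0`, so it is positive there. On the boundary `Im G(e^{iθ}) = sin θ · Q(θ)` with
`Q = ∑ c i D_i` (`D_i` the Dirichlet kernel), hence `Q ≥ 0` on `[0, π]`.

The bound is a positive quadrature rule. On `N + 1` nodes spaced by `π / (N + 1)` the cosines
`cos (2mθ)`, `1 ≤ m ≤ N`, sum to zero, so the node sums of `Q` and of `sin² θ · Q` are
`(N + 1) ∑ c i` and `(N + 1) c 0 / 2`. With `β = π / (2N + 2)` this gives
`(N + 1) (∑ c i - 1 / (2 cos² β)) = ∑_t Q(θ_t) (1 - sin² θ_t / cos² β)`, and for the nodes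
`θ_t = (2t + N mod 2) β` every term is nonnegative.
-/

open Real Finset

namespace OddUnivalent

theorem sum_Icc_one_eq_sum_range {M : Type*} [AddCommMonoid M] (f : ℕ → M) (N : ℕ) :
    ∑ j ∈ Icc 1 N, f j = ∑ i ∈ range N, f (i + 1) := by
  rw [range_eq_Ico, sum_Ico_add', zero_add, Ico_add_one_right_eq_Icc]

noncomputable def dirichletKernel (n : ℕ) (θ : ℝ) : ℝ := 1 + 2 * ∑ m ∈ Icc 1 n, cos (2 * m * θ)

theorem sin_mul_dirichletKernel (n : ℕ) (θ : ℝ) :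
    sin θ * dirichletKernel n θ = sin ((2 * n + 1) * θ) := by
  induction n with
  | zero => simp [dirichletKernel]
  | succ n ih =>
    have h : sin ((2 * (n + 1 : ℕ) + 1) * θ)
        = sin ((2 * n + 1) * θ) + 2 * sin θ * cos (2 * (n + 1 : ℕ) * θ) := by
      rw [show (2 * (n + 1 : ℕ) + 1) * θ = 2 * (n + 1 : ℕ) * θ + θ by push_cast; ring,
        show (2 * n + 1) * θ = 2 * (n + 1 : ℕ) * θ - θ by push_cast; ring, sin_add, sin_sub]
      ring
    rw [h, ← ih, dirichletKernel, dirichletKernel, sum_Icc_succ_top (by omega)]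
    ring

theorem sin_sq_mul_dirichletKernel (n : ℕ) (θ : ℝ) :
    sin θ ^ 2 * dirichletKernel n θ = (cos (2 * n * θ) - cos (2 * (n + 1 : ℕ) * θ)) / 2 := by
  rw [sq, mul_assoc, sin_mul_dirichletKernel, cos_sub_cos]
  rw [show (2 * n * θ + 2 * (n + 1 : ℕ) * θ) / 2 = (2 * n + 1) * θ by push_cast; ring,
    show (2 * n * θ - 2 * (n + 1 : ℕ) * θ) / 2 = -θ by push_cast; ring, sin_neg]
  ring

theorem sum_range_cos_add_eq_zero {n m : ℕ} (hm0 : m ≠ 0) (hmn : m < n) (y : ℝ) :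
    ∑ t ∈ range n, cos (y + t * (2 * π * m / n)) = 0 := by
  set ζ : ℂ := Complex.exp (2 * π * Complex.I / n)
  have hζ : IsPrimitiveRoot ζ n := Complex.isPrimitiveRoot_exp n (by omega)
  have hgeom : ∑ t ∈ range n, (ζ ^ m) ^ t = 0 := by
    rw [geom_sum_eq (hζ.pow_ne_one_of_pos_of_lt hm0 hmn), ← pow_mul, mul_comm, pow_mul,
      hζ.pow_eq_one, one_pow, sub_self, zero_div]
  have hterm : ∀ t : ℕ, cos (y + t * (2 * π * m / n)) =
      (Complex.exp (y * Complex.I) * (ζ ^ m) ^ t).re := by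
    intro t
    rw [← Complex.exp_nat_mul, ← Complex.exp_nat_mul, ← Complex.exp_add,
      ← Complex.exp_ofReal_mul_I_re]
    congr 2
    push_cast
    ring
  simp_rw [hterm, ← Complex.re_sum, ← mul_sum, hgeom, mul_zero, Complex.zero_re]

section Nodes

variable (x : ℝ) {N : ℕ}

theorem sum_cos_two_mul_nodes {m : ℕ} (hm : m ≤ N) :
    ∑ t ∈ range (N + 1), cos (2 * m * (x + t * (π / (N + 1))))
      = if m = 0 then (N + 1 : ℝ) else 0 := by
  split_ifs with h0
  · simp [h0]
  · rw [← sum_range_cos_add_eq_zero h0 (Nat.lt_succ_of_le hm) (2 * m * x)]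
    refine sum_congr rfl fun t _ => congrArg cos ?_
    push_cast
    ring

theorem sum_dirichletKernel_nodes {n : ℕ} (hn : n ≤ N) :
    ∑ t ∈ range (N + 1), dirichletKernel n (x + t * (π / (N + 1))) = N + 1 := by
  have hvanish : ∀ m ∈ Icc 1 n, ∑ t ∈ range (N + 1), cos (2 * m * (x + t * (π / (N + 1)))) = 0 := by
    intro m hm
    rw [mem_Icc] at hm
    rw [sum_cos_two_mul_nodes x (hm.2.trans hn), if_neg (by omega)]
  simp only [dirichletKernel, sum_add_distrib, ← mul_sum]
  rw [sum_comm, sum_congr rfl hvanish]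
  simp

theorem sum_sin_sq_mul_dirichletKernel_nodes {n : ℕ} (hn : n < N) :
    ∑ t ∈ range (N + 1), sin (x + t * (π / (N + 1))) ^ 2 * dirichletKernel n (x + t * (π / (N + 1)))
      = if n = 0 then (N + 1 : ℝ) / 2 else 0 := by
  simp only [sin_sq_mul_dirichletKernel, ← sum_div, sum_sub_distrib]
  rw [sum_cos_two_mul_nodes x hn.le, sum_cos_two_mul_nodes x hn, if_neg n.succ_ne_zero]
  split_ifs <;> ring

end Nodes

theorem sin_sq_le_cos_sq {N k : ℕ} (hk : k ≤ 2 * N + 1) (hkN : k ≠ N + 1) :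
    sin (k * (π / (2 * N + 2))) ^ 2 ≤ cos (π / (2 * N + 2)) ^ 2 := by
  have hNβ : ((N : ℝ) + 1) * (π / (2 * N + 2)) = π / 2 := by field_simp
  set β := π / (2 * N + 2)
  have hβ : 0 < β := by positivity
  have hd1 : (1 : ℝ) ≤ |(k : ℝ) - (N + 1)| := by
    rcases Nat.lt_or_gt_of_ne hkN with h | h
    · have : (k : ℝ) + 1 ≤ N + 1 := by exact_mod_cast h
      rw [abs_of_neg (by linarith)]
      linarith
    · have : (N : ℝ) + 2 ≤ k := by exact_mod_cast h
      rw [abs_of_pos (by linarith)]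
      linarith
  have hd2 : |(k : ℝ) - (N + 1)| ≤ N + 1 := by
    have : (k : ℝ) ≤ 2 * N + 1 := by exact_mod_cast hk
    rw [abs_le]
    constructor <;> linarith [(k.cast_nonneg : (0 : ℝ) ≤ k)]
  have hy : |k * β - π / 2| = |(k : ℝ) - (N + 1)| * β := by
    rw [← hNβ, ← sub_mul, abs_mul, abs_of_pos hβ]
  rw [← cos_sub_pi_div_two, ← cos_abs, hy]
  refine pow_le_pow_left₀ (cos_nonneg_of_neg_pi_div_two_le_of_le ?_ ?_) ?_ 2
  · nlinarith [pi_pos]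
  · rw [← hNβ]; exact mul_le_mul_of_nonneg_right hd2 hβ.le
  · apply cos_le_cos_of_nonneg_of_le_pi hβ.le
    · nlinarith [pi_pos]
    · nlinarith

section UnitDisc

open Complex Metric Set Filter Topology ComplexConjugate

theorem I_pow_two_mul_add_one (i : ℕ) : I ^ (2 * i + 1) = (-1) ^ i * I := by
  rw [pow_succ, pow_mul, I_sq]

theorem injOn_I_mul_comp_neg_I_mul {f : ℂ → ℂ} (hf : InjOn f (ball 0 1)) :
    InjOn (fun z => I * f (-I * z)) (ball 0 1) := by
  intro z hz w hw h
  have hmaps : ∀ v ∈ ball (0 : ℂ) 1, -I * v ∈ ball (0 : ℂ) 1 := fun v hv => by simpa using hv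
  simpa using hf (hmaps z hz) (hmaps w hw) (mul_left_cancel₀ I_ne_zero h)

theorem hasDerivAt_im_comp_ofReal_mul_I {f : ℂ → ℂ} {f' : ℂ} (hf' : HasDerivAt f f' 0) :
    HasDerivAt (fun t : ℝ => (f (t * I)).im) f'.re 0 := by
  have hmul : HasDerivAt (fun w : ℂ => w * I) I ((0 : ℝ) : ℂ) := by
    simpa using (hasDerivAt_id ((0 : ℝ) : ℂ)).mul_const I
  have h := imCLM.hasFDerivAt.comp_hasDerivAt (0 : ℝ)
    (HasDerivAt.comp ((0 : ℝ) : ℂ) (by simpa using hf') hmul).comp_ofReal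
  rw [imCLM_apply, mul_I_im] at h
  exact h

theorem exists_mem_ball_im_pos {f : ℂ → ℂ} {f' : ℂ} (hf0 : (f 0).im = 0)
    (hf' : HasDerivAt f f' 0) (hf'_re : 0 < f'.re) :
    ∃ w ∈ ball (0 : ℂ) 1, 0 < w.im ∧ 0 < (f w).im := by
  have hev : ∀ᶠ t in 𝓝[>] (0 : ℝ),
      0 < t⁻¹ • ((f ((0 + t : ℝ) * I)).im - (f ((0 : ℝ) * I)).im) ∧ t < 1 :=
    ((hasDerivAt_im_comp_ofReal_mul_I hf').tendsto_slope_zero_right.eventually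
      (lt_mem_nhds hf'_re)).and (nhdsWithin_le_nhds (gt_mem_nhds one_pos))
  obtain ⟨t, ⟨hslope, ht1⟩, ht0 : 0 < t⟩ := (hev.and self_mem_nhdsWithin).exists
  simp only [ofReal_zero, zero_mul, hf0, sub_zero, zero_add, smul_eq_mul] at hslope
  refine ⟨t * I, ?_, by simpa using ht0, pos_of_mul_pos_right hslope (inv_nonneg.2 ht0.le)⟩
  simpa [abs_of_pos ht0] using ht1

theorem im_pos_of_injOn_ball {f : ℂ → ℂ} {f' : ℂ} (hf : ContinuousOn f (ball 0 1))
    (hconj : ∀ z, f (conj z) = conj (f z)) (hinj : InjOn f (ball 0 1))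
    (hf' : HasDerivAt f f' 0) (hf'_re : 0 < f'.re) {z : ℂ} (hz : z ∈ ball 0 1)
    (him : 0 < z.im) : 0 < (f z).im := by
  set U := ball (0 : ℂ) 1 ∩ {w | 0 < w.im}
  have hne : ∀ w ∈ U, (f w).im ≠ 0 := by
    intro w hw hfw
    have hfix : f (conj w) = f w := by rw [hconj, conj_eq_iff_im.mpr hfw]
    exact hw.2.ne' (conj_eq_iff_im.mp (hinj (by simpa using hw.1) hw.1 hfix))
  have hf0 : (f 0).im = 0 := conj_eq_iff_im.mp (by simpa using (hconj 0).symm)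
  obtain ⟨w, hw, hwim, hfw⟩ := exists_mem_ball_im_pos hf0 hf' hf'_re
  have hU : IsPreconnected U :=
    ((convex_ball 0 1).inter (convex_halfSpace_im_gt 0)).isPreconnected
  by_contra! hle
  obtain ⟨v, hvU, hv⟩ := hU.intermediate_value ⟨hz, him⟩ ⟨hw, hwim⟩
    (continuous_im.comp_continuousOn (hf.mono inter_subset_left)) ⟨hle, hfw.le⟩
  exact hne v hvU hv

theorem im_nonneg_of_forall_im_pos {f : ℂ → ℂ} (hf : ContinuousOn f (closedBall 0 1))
    (hpos : ∀ z ∈ ball (0 : ℂ) 1, 0 < z.im → 0 < (f z).im) {w : ℂ} (hw : w ∈ closedBall 0 1)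
    (him : 0 < w.im) : 0 ≤ (f w).im := by
  have hmem : ∀ r ∈ Ioo (0 : ℝ) 1, (r : ℂ) * w ∈ ball 0 1 ∧ 0 < ((r : ℂ) * w).im := by
    intro r hr
    rw [mem_closedBall_zero_iff] at hw
    refine ⟨?_, by simpa using mul_pos hr.1 him⟩
    rw [mem_ball_zero_iff, norm_mul, norm_real, Real.norm_of_nonneg hr.1.le]
    nlinarith [hr.2, mul_le_mul_of_nonneg_left hw hr.1.le]
  have hlim : Tendsto (fun r : ℝ => (r : ℂ) * w) (𝓝[<] 1) (𝓝[closedBall 0 1] w) := by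
    refine tendsto_nhdsWithin_iff.2 ⟨?_, ?_⟩
    · exact ((by fun_prop : Continuous fun r : ℝ => (r : ℂ) * w).tendsto' 1 w (by simp)).mono_left
        nhdsWithin_le_nhds
    · filter_upwards [Ioo_mem_nhdsLT (zero_lt_one' ℝ)] with r hr
      exact ball_subset_closedBall (hmem r hr).1
  refine ge_of_tendsto (continuous_im.continuousAt.tendsto.comp ((hf w hw).tendsto.comp hlim)) ?_
  filter_upwards [Ioo_mem_nhdsLT (zero_lt_one' ℝ)] with r hr
  exact (hpos _ (hmem r hr).1 (hmem r hr).2).le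

noncomputable def oddPoly (c : ℕ → ℝ) (N : ℕ) (z : ℂ) : ℂ :=
  ∑ i ∈ range N, (c i : ℂ) * z ^ (2 * i + 1)

noncomputable def boundaryQuotient (c : ℕ → ℝ) (N : ℕ) (θ : ℝ) : ℝ :=
  ∑ i ∈ range N, c i * dirichletKernel i θ

variable (c : ℕ → ℝ) {N : ℕ}

theorem continuous_oddPoly : Continuous (oddPoly c N) := by
  unfold oddPoly
  fun_prop

theorem oddPoly_conj (z : ℂ) : oddPoly c N (conj z) = conj (oddPoly c N z) := by
  simp [oddPoly]

theorem hasDerivAt_oddPoly_zero (hN : 0 < N) : HasDerivAt (oddPoly c N) (c 0) 0 := by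
  have h : HasDerivAt (oddPoly c N) _ 0 := HasDerivAt.fun_sum (u := range N) fun i _ =>
    (hasDerivAt_pow (2 * i + 1) (0 : ℂ)).const_mul (c i : ℂ)
  rwa [sum_eq_single_of_mem 0 (mem_range.2 hN) fun i _ hi => by simp [hi], pow_zero, mul_one,
    Nat.cast_one, mul_one] at h

theorem im_oddPoly_exp_mul_I (θ : ℝ) :
    (oddPoly c N (exp (θ * I))).im = Real.sin θ * boundaryQuotient c N θ := by
  simp only [oddPoly, boundaryQuotient, im_sum, mul_sum]
  refine sum_congr rfl fun i _ => ?_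
  have harg : (exp (θ * I)) ^ (2 * i + 1) = exp (((2 * i + 1) * θ : ℝ) * I) := by
    rw [← Complex.exp_nat_mul]
    push_cast
    ring_nf
  rw [mul_left_comm, sin_mul_dirichletKernel, harg, im_ofReal_mul, exp_ofReal_mul_I_im]

theorem continuous_boundaryQuotient : Continuous (boundaryQuotient c N) := by
  unfold boundaryQuotient dirichletKernel
  fun_prop

theorem sum_boundaryQuotient_mul_nodes (hN : 0 < N) (x κ : ℝ) :
    ∑ t ∈ range (N + 1), boundaryQuotient c N (x + t * (π / (N + 1))) *
        (1 - κ * Real.sin (x + t * (π / (N + 1))) ^ 2)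
      = (N + 1) * (∑ i ∈ range N, c i - κ * c 0 / 2) := by
  set θ : ℕ → ℝ := fun t => x + t * (π / (N + 1))
  have hQ : ∑ t ∈ range (N + 1), boundaryQuotient c N (θ t) = (N + 1) * ∑ i ∈ range N, c i := by
    simp only [boundaryQuotient]
    rw [sum_comm, mul_sum]
    refine sum_congr rfl fun i hi => ?_
    rw [← mul_sum, sum_dirichletKernel_nodes x (mem_range.1 hi).le, mul_comm]
  have hsinQ : ∑ t ∈ range (N + 1), Real.sin (θ t) ^ 2 * boundaryQuotient c N (θ t)
      = (N + 1) * c 0 / 2 := by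
    simp only [boundaryQuotient, mul_sum]
    rw [sum_comm, sum_eq_single_of_mem 0 (mem_range.2 hN)]
    · simp only [mul_left_comm _ (c _), ← mul_sum]
      rw [sum_sin_sq_mul_dirichletKernel_nodes x hN, if_pos rfl]
      ring
    · intro i hi hi0
      simp only [mul_left_comm _ (c _), ← mul_sum]
      rw [sum_sin_sq_mul_dirichletKernel_nodes x (mem_range.1 hi), if_neg hi0, mul_zero]
  calc ∑ t ∈ range (N + 1), boundaryQuotient c N (θ t) * (1 - κ * Real.sin (θ t) ^ 2)
      = ∑ t ∈ range (N + 1), boundaryQuotient c N (θ t)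
        - κ * ∑ t ∈ range (N + 1), Real.sin (θ t) ^ 2 * boundaryQuotient c N (θ t) := by
        rw [mul_sum, ← sum_sub_distrib]
        exact sum_congr rfl fun t _ => by ring
    _ = (N + 1) * (∑ i ∈ range N, c i - κ * c 0 / 2) := by
        rw [hQ, hsinQ]
        ring

theorem boundaryQuotient_nonneg (hN : 0 < N) (hc : 0 < c 0)
    (hinj : InjOn (oddPoly c N) (ball 0 1)) {θ : ℝ} (hθ : θ ∈ Icc 0 π) :
    0 ≤ boundaryQuotient c N θ := by
  have hpos : ∀ z ∈ ball (0 : ℂ) 1, 0 < z.im → 0 < (oddPoly c N z).im := fun z hz him =>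
    im_pos_of_injOn_ball (continuous_oddPoly c).continuousOn (oddPoly_conj c) hinj
      (hasDerivAt_oddPoly_zero c hN) (by simpa using hc) hz him
  have hopen : Ioo 0 π ⊆ {θ | 0 ≤ boundaryQuotient c N θ} := by
    intro θ hθ
    refine nonneg_of_mul_nonneg_right ?_ (sin_pos_of_pos_of_lt_pi hθ.1 hθ.2)
    rw [← im_oddPoly_exp_mul_I]
    refine im_nonneg_of_forall_im_pos (continuous_oddPoly c).continuousOn hpos ?_ ?_
    · simp [norm_exp_ofReal_mul_I]
    · rw [exp_ofReal_mul_I_im]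
      exact sin_pos_of_pos_of_lt_pi hθ.1 hθ.2
  have hclosed :=
    (isClosed_le continuous_const (continuous_boundaryQuotient c)).closure_subset_iff.2 hopen
  rw [closure_Ioo pi_pos.ne] at hclosed
  exact hclosed hθ

theorem one_div_two_mul_cos_sq_le_sum (hN : 0 < N) (hc : c 0 = 1)
    (hinj : InjOn (oddPoly c N) (ball 0 1)) :
    1 / (2 * Real.cos (π / (2 * N + 2)) ^ 2) ≤ ∑ i ∈ range N, c i := by
  have hπ : (2 * N + 2 : ℝ) * (π / (2 * N + 2)) = π := by field_simp
  have hnode : ∀ t : ℕ, ((N % 2 : ℕ) : ℝ) * (π / (2 * N + 2)) + t * (π / (N + 1))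
      = ((2 * t + N % 2 : ℕ) : ℝ) * (π / (2 * N + 2)) := fun t => by
    push_cast
    field_simp
    ring
  set β := π / (2 * N + 2)
  -- The parity of `2 * t + N % 2` keeps every node away from `π / 2 = (N + 1) * β`.
  have hterm : ∀ t ∈ range (N + 1),
      0 ≤ boundaryQuotient c N ((N % 2 : ℕ) * β + t * (π / (N + 1))) *
        (1 - 1 / Real.cos β ^ 2 * Real.sin ((N % 2 : ℕ) * β + t * (π / (N + 1))) ^ 2) := by
    intro t ht
    have hk : 2 * t + N % 2 ≤ 2 * N + 1 := by have := mem_range.1 ht; omega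
    have hkπ : ((2 * t + N % 2 : ℕ) : ℝ) * β ≤ π := by
      rw [← hπ]
      gcongr
      exact_mod_cast hk.trans (Nat.le_succ _)
    rw [hnode]
    refine mul_nonneg (boundaryQuotient_nonneg c hN (hc ▸ one_pos) hinj ⟨by positivity, hkπ⟩) ?_
    rw [sub_nonneg, one_div_mul_eq_div]
    exact div_le_one_of_le₀ (sin_sq_le_cos_sq hk (by omega)) (sq_nonneg _)
  have hsum := sum_nonneg hterm
  rw [sum_boundaryQuotient_mul_nodes c hN, hc] at hsum
  have := nonneg_of_mul_nonneg_right hsum (by positivity)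
  linarith [show 1 / (2 * Real.cos β ^ 2) = 1 / Real.cos β ^ 2 * 1 / 2 by ring]

theorem oddPoly_I : oddPoly c N I = I * (∑ i ∈ range N, (-1) ^ i * c i : ℝ) := by
  simp only [oddPoly, I_pow_two_mul_add_one]
  push_cast
  rw [mul_sum]
  exact sum_congr rfl fun i _ => by ring

theorem I_mul_oddPoly_neg_I_mul (z : ℂ) :
    I * oddPoly c N (-I * z) = oddPoly (fun i => (-1) ^ i * c i) N z := by
  simp only [oddPoly, mul_sum, mul_pow, Odd.neg_pow (odd_two_mul_add_one _), I_pow_two_mul_add_one]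
  push_cast
  refine sum_congr rfl fun i _ => ?_
  linear_combination (-(c i : ℂ) * (-1) ^ i * z ^ (2 * i + 1)) * I_sq

end UnitDisc

end OddUnivalent

open OddUnivalent

theorem odd_univalent_poly_bound (N : ℕ) (hN : 1 ≤ N) (a : ℕ → ℝ)
    (ha1 : a 1 = 1)
    (hinj : Set.InjOn (fun z : ℂ => ∑ j ∈ Finset.Icc 1 N, (a j : ℂ) * z ^ (2 * j - 1))
      {z : ℂ | ‖z‖ < 1}) :
    ∑ j ∈ Finset.Icc 1 N, (-1 : ℝ) ^ (j + 1) * a j ≥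
        1 / (2 * Real.cos (π / (2 * N + 2)) ^ 2) ∧
      -Complex.I * (∑ j ∈ Finset.Icc 1 N, (a j : ℂ) * Complex.I ^ (2 * j - 1)) =
        ((∑ j ∈ Finset.Icc 1 N, (-1 : ℝ) ^ (j + 1) * a j : ℝ) : ℂ) := by
  have hF : ∀ z : ℂ,
      ∑ j ∈ Icc 1 N, (a j : ℂ) * z ^ (2 * j - 1) = oddPoly (fun i => a (i + 1)) N z :=
    fun z => by simp [sum_Icc_one_eq_sum_range, oddPoly, Nat.mul_succ]
  have hsum : ∑ j ∈ Icc 1 N, (-1 : ℝ) ^ (j + 1) * a j = ∑ i ∈ range N, (-1) ^ i * a (i + 1) := by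
    simp [sum_Icc_one_eq_sum_range, pow_succ]
  have hball : {z : ℂ | ‖z‖ < 1} = Metric.ball 0 1 := by ext; simp
  rw [funext hF, hball] at hinj
  have hinj' : Set.InjOn (oddPoly (fun i => (-1) ^ i * a (i + 1)) N) (Metric.ball 0 1) := by
    simpa only [I_mul_oddPoly_neg_I_mul] using injOn_I_mul_comp_neg_I_mul hinj
  refine ⟨hsum ▸ one_div_two_mul_cos_sq_le_sum _ hN (by simp [ha1]) hinj', ?_⟩
  rw [hF, oddPoly_I, hsum, ← mul_assoc, neg_mul, Complex.I_mul_I, neg_neg, one_mul]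
end
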